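/- Residual norm formula for shifted systems: if (A − σI_n)V = V((T − σI_{2m}) ⊗ I_p) + W(τ E^T ⊗ I_p) where V ∈ ℝ^{n×2mp} has F-orthonormal block columns, W ∈ ℝ^{n×p} has unit Frobenius norm and is F-orthogonal to all block columns of V, τ ∈ ℝ^{1×2} and E ∈ ℝ^{2m×2} picks the last two coordinates, then for Y solving (T − σI_{2m})Y = β e_1 and X = X_0 + V(Y ⊗ I_p) with R_0 = B − (A−σI)X_0 = β V_1, the residual R = B − (A−σI)X satisfies ‖R‖_F = |β| · ‖τ E^T (T − σI_{2m})^{-1} e_1‖_2. -/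
import Mathlib


open Matrix BigOperators

/-- Frobenius inner product `⟨X,Y⟩_F = trace(Yᵀ X)`. -/
noncomputable def finner {n p : ℕ} (X Y : Matrix (Fin n) (Fin p) ℝ) : ℝ :=
  Matrix.trace (Yᵀ * X)

/-- Frobenius norm. -/
noncomputable def fnorm {n p : ℕ} (X : Matrix (Fin n) (Fin p) ℝ) : ℝ :=
  Real.sqrt (finner X X)

/-- `E = [e_{2m−1}, e_{2m}]`, the last two columns of `I_{2m}` (0-indexed). -/
def Ecols (m : ℕ) : Matrix (Fin (2 * m)) (Fin 2) ℝ :=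
  fun j k => if (j : ℕ) = 2 * m - 2 + (k : ℕ) then 1 else 0

/-- residual norm formula for shifted systems:
`‖R‖_F = |β| · ‖τ Eᵀ (T − σI)⁻¹ e₁‖₂` (here `τ Eᵀ (T − σI)⁻¹ e₁` is a scalar). -/
theorem shifted_residual_norm {n p m : ℕ} (hm : 0 < m)
    (A : Matrix (Fin n) (Fin n) ℝ) (B X0 : Matrix (Fin n) (Fin p) ℝ) (σ β : ℝ)
    (T : Matrix (Fin (2 * m)) (Fin (2 * m)) ℝ)
    (hσ : IsUnit (T - σ • 1))
    (V : Fin (2 * m) → Matrix (Fin n) (Fin p) ℝ)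
    (horth : ∀ i j, finner (V i) (V j) = if i = j then 1 else 0)
    (W : Matrix (Fin n) (Fin p) ℝ)
    (hWnorm : fnorm W = 1) (hWorth : ∀ i, finner W (V i) = 0)
    (τ : Fin 2 → ℝ)
    (hArnoldi : ∀ j, (A - σ • 1) * V j =
      (∑ i, (T - σ • 1) i j • V i) + (Matrix.vecMul τ (Ecols m)ᵀ j) • W)
    (Y : Fin (2 * m) → ℝ)
    (hY : (T - σ • 1).mulVec Y = β • (Pi.single (⟨0, by omega⟩ : Fin (2 * m)) 1 : Fin (2 * m) → ℝ))
    (hR0 : B - (A - σ • 1) * X0 = β • V ⟨0, by omega⟩)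
    (X : Matrix (Fin n) (Fin p) ℝ)
    (hX : X = X0 + ∑ i, Y i • V i) :
    fnorm (B - (A - σ • 1) * X) =
      |β| * |Matrix.vecMul τ (Ecols m)ᵀ ⬝ᵥ
        (T - σ • 1)⁻¹.mulVec (Pi.single (⟨0, by omega⟩ : Fin (2 * m)) 1)| := by
  set M := T - σ • 1 with hMdef
  set c := Matrix.vecMul τ (Ecols m)ᵀ with hc
  set e0 : Fin (2*m) → ℝ := (Pi.single (⟨0, by omega⟩ : Fin (2 * m)) 1 : Fin (2 * m) → ℝ) with he0
  -- Step 1: residual equals -(c ⬝ᵥ Y) • W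
  have hsum : ∑ j, Y j • ((A - σ • 1) * V j)
      = (∑ i, (M.mulVec Y i) • V i) + (c ⬝ᵥ Y) • W := by
    simp only [hArnoldi]
    rw [Finset.sum_congr rfl (fun j _ => smul_add (Y j) _ _), Finset.sum_add_distrib]
    congr 1
    · simp only [Finset.smul_sum, smul_smul]
      rw [Finset.sum_comm]
      refine Finset.sum_congr rfl fun i _ => ?_
      simp [Matrix.mulVec, dotProduct, Finset.sum_smul, mul_comm]
    · simp [smul_smul, dotProduct, ← Finset.sum_smul, mul_comm]
  have hsingle : ∑ i, (β • e0) i • V i = β • V ⟨0, by omega⟩ := by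
    simp only [he0, Pi.smul_apply, Pi.single_apply, smul_eq_mul, mul_ite, mul_one, mul_zero,
      ite_smul, zero_smul]
    simp
  have hR : B - (A - σ • 1) * X = (-(c ⬝ᵥ Y)) • W := by
    subst hX
    rw [Matrix.mul_add, Matrix.mul_sum]
    simp only [Matrix.mul_smul]
    rw [sub_add_eq_sub_sub, hsum, hR0, hY, hsingle]
    abel_nf
    simp [neg_smul]
  rw [hR]
  -- Step 2: fnorm of scalar multiple
  have hfn : ∀ (r : ℝ), fnorm (r • W) = |r| := by
    intro r
    have h2 : finner (r • W) (r • W) = r^2 * finner W W := by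
      simp [finner, Matrix.transpose_smul, Matrix.smul_mul, Matrix.mul_smul, Matrix.trace_smul]
      ring
    rw [fnorm, h2, Real.sqrt_mul (sq_nonneg r), Real.sqrt_sq_eq_abs]
    have h3 : Real.sqrt (finner W W) = 1 := hWnorm
    rw [h3, mul_one]
  rw [hfn, abs_neg]
  -- Step 3: Y = β • M⁻¹ e0
  have hYval : Y = β • M⁻¹.mulVec e0 := by
    have h1 : M⁻¹.mulVec (M.mulVec Y) = Y := by
      rw [Matrix.mulVec_mulVec, Matrix.nonsing_inv_mul M ((Matrix.isUnit_iff_isUnit_det M).mp hσ),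
        Matrix.one_mulVec]
    rw [← h1, hY, Matrix.mulVec_smul]
  rw [hYval, dotProduct_smul]
  simp [abs_mul]
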